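/- arXiv:2202.04113 — 2 statements merged into one kernel-verified Lean document; each statement's English description precedes it below -/
import Mathlib

section
/- Let G be a finite simple graph on n vertices and S a set of edges such that every vertex is incident to exactly two edges of S. Suppose there is an injective labeling f : S → {1, …, n} with the property that whenever two edges of S share a vertex, their labels differ by exactly 1 modulo n. Then S is the edge set of a Hamiltonian cycle of G. -/
open SimpleGraph

/-- Walk built from a chain of adjacent vertices. -/
def mkW {V : Type*} (G : SimpleGraph V) (p : ℕ → V)
    (h : ∀ i, G.Adj (p i) (p (i+1))) : (m : ℕ) → G.Walk (p 0) (p m)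
  | 0 => SimpleGraph.Walk.nil
  | (m+1) => (mkW G p h m).concat (h m)

lemma mkW_support {V : Type*} (G : SimpleGraph V) (p : ℕ → V)
    (h : ∀ i, G.Adj (p i) (p (i+1))) :
    ∀ m, (mkW G p h m).support = (List.range (m+1)).map p
  | 0 => by simp [mkW, List.range_succ]
  | (m+1) => by
      rw [mkW, SimpleGraph.Walk.support_concat, mkW_support G p h m,
        List.range_succ (n := m + 1)]
      simp

lemma mkW_edges {V : Type*} (G : SimpleGraph V) (p : ℕ → V)
    (h : ∀ i, G.Adj (p i) (p (i+1))) :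
    ∀ m, (mkW G p h m).edges = (List.range m).map (fun i => s(p i, p (i+1)))
  | 0 => by simp [mkW]
  | (m+1) => by
      rw [mkW, SimpleGraph.Walk.edges_concat, mkW_edges G p h m,
        List.range_succ (n := m)]
      simp

lemma mkW_length {V : Type*} (G : SimpleGraph V) (p : ℕ → V)
    (h : ∀ i, G.Adj (p i) (p (i+1))) :
    ∀ m, (mkW G p h m).length = m
  | 0 => rfl
  | (m+1) => by rw [mkW, SimpleGraph.Walk.length_concat, mkW_length G p h m]

/-- If every vertex is incident to exactly two edges of `S`, and there is an injective
labeling `f : S → {1, …, n}` such that edges of `S` sharing a vertex get labels differing by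
exactly 1 modulo `n`, then `S` is the edge set of a Hamiltonian cycle of `G`. -/
theorem stmt1 {V : Type*} [Fintype V] [DecidableEq V] (G : SimpleGraph V)
    (n : ℕ) (hn : n = Fintype.card V) (h3 : 3 ≤ n)
    (S : Finset (Sym2 V)) (hSE : ∀ e ∈ S, e ∈ G.edgeSet)
    (hdeg : ∀ v : V, (S.filter (fun e => v ∈ e)).card = 2)
    (f : Sym2 V → ℕ)
    (hrange : ∀ e ∈ S, f e ∈ Finset.Icc 1 n)
    (hinj : Set.InjOn f ↑S)
    (hadj : ∀ e ∈ S, ∀ e' ∈ S, e ≠ e' → (∃ v : V, v ∈ e ∧ v ∈ e') →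
      ((f e : ZMod n) - (f e' : ZMod n) = 1 ∨ (f e : ZMod n) - (f e' : ZMod n) = -1)) :
    ∃ (v : V) (c : G.Walk v v), c.IsHamiltonianCycle ∧ c.edges.toFinset = S := by
  haveI : NeZero n := ⟨by omega⟩
  haveI : Fact (1 < n) := ⟨by omega⟩
  -- every edge of S is non-diagonal (has two distinct endpoints)
  have hrep : ∀ z : Sym2 V, ∃ a b : V, z = s(a, b) := fun z =>
    Sym2.ind (fun a b => ⟨a, b, rfl⟩) z
  have hcard2 : ∀ e ∈ S, (Finset.univ.filter (fun v : V => v ∈ e)).card = 2 := by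
    intro e he
    obtain ⟨a, b, rfl⟩ := hrep e
    have hab : a ≠ b := (G.mem_edgeSet.1 (hSE _ he)).ne
    have hset : Finset.univ.filter (fun v : V => v ∈ s(a, b)) = {a, b} := by
      ext v; simp [Sym2.mem_iff]
    rw [hset, Finset.card_insert_of_notMem (by simp [hab]), Finset.card_singleton]
  -- |S| = n by double counting
  have hcardS : S.card = n := by
    have h1 : ∑ v : V, (S.filter (fun e => v ∈ e)).card = n * 2 := by
      rw [Finset.sum_congr rfl (fun v _ => hdeg v)]
      simp [hn, mul_comm]
    have h2 : ∑ v : V, (S.filter (fun e => v ∈ e)).card = S.card * 2 := by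
      calc ∑ v : V, (S.filter (fun e => v ∈ e)).card
          = ∑ v : V, ∑ e ∈ S, if v ∈ e then 1 else 0 := by
            refine Finset.sum_congr rfl fun v _ => ?_
            rw [Finset.card_filter]
        _ = ∑ e ∈ S, ∑ v : V, if v ∈ e then 1 else 0 := Finset.sum_comm
        _ = ∑ e ∈ S, (Finset.univ.filter (fun v : V => v ∈ e)).card := by
            refine Finset.sum_congr rfl fun e _ => ?_
            rw [Finset.card_filter]
        _ = ∑ _e ∈ S, 2 := Finset.sum_congr rfl (fun e he => hcard2 e he)
        _ = S.card * 2 := by simp [mul_comm]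
    omega
  -- the labels mod n are injective on S
  have hmodinj : ∀ a b : ℕ, a ∈ Finset.Icc 1 n → b ∈ Finset.Icc 1 n →
      ((a : ZMod n) = (b : ZMod n)) → a = b := by
    intro a b ha hb hab
    rw [Finset.mem_Icc] at ha hb
    have hmod : a % n = b % n := (ZMod.natCast_eq_natCast_iff a b n).1 hab
    rcases eq_or_lt_of_le ha.2 with h1 | h1 <;> rcases eq_or_lt_of_le hb.2 with h2 | h2
    · omega
    · rw [h1, Nat.mod_self, Nat.mod_eq_of_lt h2] at hmod; omega
    · rw [h2, Nat.mod_self, Nat.mod_eq_of_lt h1] at hmod; omega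
    · rwa [Nat.mod_eq_of_lt h1, Nat.mod_eq_of_lt h2] at hmod
  have hFinj : ∀ e ∈ S, ∀ e' ∈ S, ((f e : ZMod n) = (f e' : ZMod n)) → e = e' :=
    fun e he e' he' h => hinj he he' (hmodinj _ _ (hrange e he) (hrange e' he') h)
  -- the labeling is surjective onto ZMod n
  have himg : S.image (fun e => ((f e : ℕ) : ZMod n)) = Finset.univ := by
    apply Finset.eq_univ_of_card
    rw [Finset.card_image_of_injOn (fun e he e' he' h => hFinj e he e' he' h), hcardS,
      ZMod.card]
  have hsurj : ∀ k : ZMod n, ∃ e, e ∈ S ∧ ((f e : ℕ) : ZMod n) = k := by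
    intro k
    have : k ∈ S.image (fun e => ((f e : ℕ) : ZMod n)) := himg ▸ Finset.mem_univ k
    simpa using this
  choose g hgS hgF using hsurj
  have hg_left : ∀ e ∈ S, g ((f e : ZMod n)) = e := fun e he =>
    hFinj _ (hgS _) _ he (by rw [hgF])
  have hg_inj : ∀ k k' : ZMod n, g k = g k' → k = k' := fun k k' h => by
    rw [← hgF k, ← hgF k', h]
  -- basic ZMod facts
  have h1ne0 : (1 : ZMod n) ≠ 0 := one_ne_zero
  have h2ne0 : (1 + 1 : ZMod n) ≠ 0 := by
    intro h
    have h2 : ((2 : ℕ) : ZMod n) = 0 := by push_cast; rw [← one_add_one_eq_two]; exact h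
    rw [ZMod.natCast_eq_zero_iff] at h2
    have := Nat.le_of_dvd (by norm_num) h2
    omega
  have hne1 : ∀ k : ZMod n, k ≠ k + 1 := fun k h => h1ne0 (left_eq_add.mp h)
  have hne2 : ∀ k : ZMod n, k ≠ k + 1 + 1 := fun k h => by
    rw [add_assoc] at h; exact h2ne0 (left_eq_add.mp h)
  have hgne : ∀ k k' : ZMod n, k ≠ k' → g k ≠ g k' := fun k k' h hc => h (hg_inj _ _ hc)
  -- second edge at a vertex
  have hfilter : ∀ w : V, ∀ e ∈ S, w ∈ e → ∃ e' ∈ S, e' ≠ e ∧ w ∈ e' := by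
    intro w e he hwe
    by_contra hcon
    push_neg at hcon
    have hsub : S.filter (fun e' => w ∈ e') ⊆ {e} := by
      intro e' he'
      rw [Finset.mem_filter] at he'
      rcases eq_or_ne e' e with h | h
      · simp [h]
      · exact absurd he'.2 (hcon e' he'.1 h)
    have := Finset.card_le_card hsub
    rw [hdeg w, Finset.card_singleton] at this
    omega
  have hmem_pair : ∀ (z : Sym2 V) (a b : V), a ≠ b → a ∈ z → b ∈ z → z = s(a, b) :=
    fun z a b hab ha hb => (Sym2.mem_and_mem_iff hab).1 ⟨ha, hb⟩
  -- each g k and g (k+1) share a vertex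
  have hshare : ∀ k : ZMod n, ∃ w : V, w ∈ g k ∧ w ∈ g (k + 1) := by
    intro k
    obtain ⟨a, b, hab⟩ := hrep (g k)
    have hane : a ≠ b := by
      have := hSE _ (hgS k); rw [hab, SimpleGraph.mem_edgeSet] at this; exact this.ne
    have ha : a ∈ g k := by rw [hab]; exact Sym2.mem_mk_left a b
    have hb : b ∈ g k := by rw [hab]; exact Sym2.mem_mk_right a b
    obtain ⟨ea, heaS, heane, hwa⟩ := hfilter a (g k) (hgS k) ha
    obtain ⟨eb, hebS, hebne, hwb⟩ := hfilter b (g k) (hgS k) hb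
    have heab : ea ≠ eb := by
      intro h
      exact heane ((hmem_pair ea a b hane hwa (h ▸ hwb)).trans hab.symm)
    have ha' := hadj ea heaS (g k) (hgS k) heane ⟨a, hwa, ha⟩
    have hb' := hadj eb hebS (g k) (hgS k) hebne ⟨b, hwb, hb⟩
    rw [hgF k] at ha' hb'
    rcases ha' with h | h
    · have : ((f ea : ℕ) : ZMod n) = k + 1 := by
        have := sub_eq_iff_eq_add.1 h; rw [this]; ring
      refine ⟨a, ha, ?_⟩
      rw [← this, hg_left ea heaS]; exact hwa
    · rcases hb' with h' | h'
      · have : ((f eb : ℕ) : ZMod n) = k + 1 := by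
          have := sub_eq_iff_eq_add.1 h'; rw [this]; ring
        refine ⟨b, hb, ?_⟩
        rw [← this, hg_left eb hebS]; exact hwb
      · exfalso
        apply heab
        apply hFinj ea heaS eb hebS
        have h1 := sub_eq_iff_eq_add.1 h
        have h2 := sub_eq_iff_eq_add.1 h'
        rw [h1, h2]
  choose vtx hv1 hv2 using hshare
  -- consecutive cycle vertices are distinct
  have hvne : ∀ k : ZMod n, vtx k ≠ vtx (k + 1) := by
    intro k h
    have hsub : ({g k, g (k+1), g (k+1+1)} : Finset (Sym2 V)) ⊆
        S.filter (fun e => vtx k ∈ e) := by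
      intro x hx
      rw [Finset.mem_insert, Finset.mem_insert, Finset.mem_singleton] at hx
      rcases hx with rfl | rfl | rfl
      · exact Finset.mem_filter.2 ⟨hgS _, hv1 k⟩
      · exact Finset.mem_filter.2 ⟨hgS _, hv2 k⟩
      · exact Finset.mem_filter.2 ⟨hgS _, h ▸ hv2 (k+1)⟩
    have hc3 : ({g k, g (k+1), g (k+1+1)} : Finset (Sym2 V)).card = 3 := by
      rw [Finset.card_insert_of_notMem, Finset.card_insert_of_notMem, Finset.card_singleton]
      · simp only [Finset.mem_singleton]
        exact hgne (k+1) (k+1+1) (hne1 (k+1))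
      · simp only [Finset.mem_insert, Finset.mem_singleton]
        push_neg
        exact ⟨hgne k (k+1) (hne1 k), hgne k (k+1+1) (hne2 k)⟩
    have := Finset.card_le_card hsub
    rw [hdeg, hc3] at this
    omega
  have hedge : ∀ k : ZMod n, g (k + 1) = s(vtx k, vtx (k + 1)) :=
    fun k => hmem_pair _ _ _ (hvne k) (hv2 k) (hv1 (k + 1))
  have hAdj : ∀ k : ZMod n, G.Adj (vtx k) (vtx (k + 1)) := by
    intro k
    have := hSE _ (hgS (k + 1))
    rw [hedge k, SimpleGraph.mem_edgeSet] at this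
    exact this
  -- vtx is injective, hence bijective
  have hvinj : Function.Injective vtx := by
    intro k k' h
    by_contra hkk
    have hpairsub : ({g k, g (k+1)} : Finset (Sym2 V)) ⊆ S.filter (fun e => vtx k ∈ e) := by
      intro x hx
      rw [Finset.mem_insert, Finset.mem_singleton] at hx
      rcases hx with rfl | rfl
      · exact Finset.mem_filter.2 ⟨hgS _, hv1 k⟩
      · exact Finset.mem_filter.2 ⟨hgS _, hv2 k⟩
    have hpaircard : ({g k, g (k+1)} : Finset (Sym2 V)).card = 2 := by
      rw [Finset.card_insert_of_notMem (by
        simp only [Finset.mem_singleton]; exact hgne k (k+1) (hne1 k)),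
        Finset.card_singleton]
    have hfeq : S.filter (fun e => vtx k ∈ e) = ({g k, g (k+1)} : Finset (Sym2 V)) :=
      (Finset.eq_of_subset_of_card_le hpairsub (by rw [hdeg, hpaircard])).symm
    have m1 : g k' ∈ S.filter (fun e => vtx k ∈ e) :=
      Finset.mem_filter.2 ⟨hgS _, h ▸ hv1 k'⟩
    have m2 : g (k'+1) ∈ S.filter (fun e => vtx k ∈ e) :=
      Finset.mem_filter.2 ⟨hgS _, h ▸ hv2 k'⟩
    rw [hfeq, Finset.mem_insert, Finset.mem_singleton] at m1 m2
    rcases m1 with h1 | h1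
    · exact hkk (hg_inj _ _ h1).symm
    · have hk' : k' = k + 1 := hg_inj _ _ h1
      rcases m2 with h2 | h2
      · have hx : k' + 1 = k := hg_inj _ _ h2
        rw [hk'] at hx
        exact hne2 k hx.symm
      · have hx : k' + 1 = k + 1 := hg_inj _ _ h2
        exact hkk (add_right_cancel hx).symm
  have hvsurj : Function.Surjective vtx := by
    have : Function.Bijective vtx :=
      (Fintype.bijective_iff_injective_and_card vtx).2 ⟨hvinj, by rw [ZMod.card, hn]⟩
    exact this.2
  -- build the walk
  set p : ℕ → V := fun i => vtx ((i : ZMod n)) with hp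
  have hcast : ∀ i : ℕ, ((i + 1 : ℕ) : ZMod n) = (i : ZMod n) + 1 := by
    intro i; push_cast; ring
  have hadjp : ∀ i : ℕ, G.Adj (p i) (p (i + 1)) := by
    intro i
    have := hAdj ((i : ZMod n))
    simpa [hp, hcast i] using this
  have hpn : p n = p 0 := by simp [hp]
  have hsym2 : ∀ i : ℕ, s(p i, p (i + 1)) = g ((i : ZMod n) + 1) := by
    intro i
    rw [hedge ((i : ZMod n))]
    simp [hp, hcast i]
  have hcastinj : ∀ i ∈ List.range n, ∀ j ∈ List.range n,
      ((i : ZMod n) = (j : ZMod n)) → i = j := by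
    intro i hi j hj hij
    rw [List.mem_range] at hi hj
    have : ((i : ZMod n)).val = ((j : ZMod n)).val := by rw [hij]
    rwa [ZMod.val_cast_of_lt hi, ZMod.val_cast_of_lt hj] at this
  refine ⟨p 0, (mkW G p hadjp n).copy rfl hpn, ?_, ?_⟩
  · -- Hamiltonian cycle
    have hsup : ((mkW G p hadjp n).copy rfl hpn).support = (List.range (n+1)).map p := by
      rw [SimpleGraph.Walk.support_copy, mkW_support]
    have htail : ((mkW G p hadjp n).copy rfl hpn).support.tail
        = (List.range n).map (fun i => p (i + 1)) := by
      rw [hsup, List.range_succ_eq_map]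
      simp [List.map_map, Function.comp_def]
    have htail_nodup : ((mkW G p hadjp n).copy rfl hpn).support.tail.Nodup := by
      rw [htail]
      refine List.Nodup.map_on ?_ (List.nodup_range (n := n))
      intro i hi j hj hij
      have : ((i : ZMod n) + 1) = ((j : ZMod n) + 1) := by
        apply hvinj
        simpa [hp, hcast i, hcast j] using hij
      exact hcastinj i hi j hj (add_right_cancel this)
    have hedges : ((mkW G p hadjp n).copy rfl hpn).edges
        = (List.range n).map (fun (i : ℕ) => g ((i : ZMod n) + 1)) := by
      rw [SimpleGraph.Walk.edges_copy, mkW_edges]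
      exact List.map_congr_left (fun i _ => hsym2 i)
    have hed_nodup : ((mkW G p hadjp n).copy rfl hpn).edges.Nodup := by
      rw [hedges]
      refine List.Nodup.map_on ?_ (List.nodup_range (n := n))
      intro i hi j hj hij
      exact hcastinj i hi j hj (add_right_cancel (hg_inj _ _ hij))
    have hlen : ((mkW G p hadjp n).copy rfl hpn).length = n := by
      rw [SimpleGraph.Walk.length_copy, mkW_length]
    have hcyc : ((mkW G p hadjp n).copy rfl hpn).IsCycle := by
      refine ⟨⟨⟨hed_nodup⟩, ?_⟩, htail_nodup⟩
      intro hnil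
      rw [hnil] at hlen
      simp at hlen
      omega
    rw [SimpleGraph.Walk.isHamiltonianCycle_iff_isCycle_and_support_count_tail_eq_one]
    refine ⟨hcyc, fun a => ?_⟩
    apply List.count_eq_one_of_mem htail_nodup
    obtain ⟨k, rfl⟩ := hvsurj a
    rw [htail]
    simp only [List.mem_map, List.mem_range]
    refine ⟨(k - 1).val, ZMod.val_lt _, ?_⟩
    have hval : (((k - 1).val : ℕ) : ZMod n) = k - 1 := ZMod.natCast_rightInverse (k - 1)
    show vtx (((k - 1).val + 1 : ℕ) : ZMod n) = vtx k
    rw [hcast, hval]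
    ring_nf
  · -- edges.toFinset = S
    have hedges : ((mkW G p hadjp n).copy rfl hpn).edges
        = (List.range n).map (fun (i : ℕ) => g ((i : ZMod n) + 1)) := by
      rw [SimpleGraph.Walk.edges_copy, mkW_edges]
      exact List.map_congr_left (fun i _ => hsym2 i)
    have hed_nodup : ((mkW G p hadjp n).copy rfl hpn).edges.Nodup := by
      rw [hedges]
      refine List.Nodup.map_on ?_ (List.nodup_range (n := n))
      intro i hi j hj hij
      exact hcastinj i hi j hj (add_right_cancel (hg_inj _ _ hij))
    have hsubS : ((mkW G p hadjp n).copy rfl hpn).edges.toFinset ⊆ S := by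
      intro x hx
      rw [List.mem_toFinset, hedges] at hx
      simp only [List.mem_map, List.mem_range] at hx
      obtain ⟨i, _, rfl⟩ := hx
      exact hgS _
    have hcardE : ((mkW G p hadjp n).copy rfl hpn).edges.toFinset.card = n := by
      rw [List.toFinset_card_of_nodup hed_nodup, hedges, List.length_map, List.length_range]
    exact Finset.eq_of_subset_of_card_le hsubS (by rw [hcardE, hcardS])
end

section
/- In a finite simple graph, suppose S is a set of edges such that every vertex has S-degree exactly 2, and S decomposes into vertex-disjoint cycles. If there exists a labeling f : S → ℤ/nℤ (n = number of vertices) with consecutive edges along each cycle differing by ±1 and with f injective, then the decomposition consists of a single cycle. -/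
open SimpleGraph

private lemma head_mem_first_edge {V : Type*} {G : SimpleGraph V} {a b : V} (w : G.Walk a b)
    (hw : w.edges ≠ []) : a ∈ w.edges.head hw := by
  cases w with
  | nil => simp at hw
  | cons h p => simp [Walk.edges_cons]

private lemma last_mem_last_edge' {V : Type*} {G : SimpleGraph V} :
    ∀ {a b : V} (w : G.Walk a b) (e : Sym2 V), w.edges.getLast? = some e → b ∈ e := by
  intro a b w
  induction w with
  | nil => intro e he; simp at he
  | @cons u c d h p ih =>
    intro e he
    cases p with
    | nil =>
      simp only [Walk.edges_cons, Walk.edges_nil, List.getLast?_singleton, Option.some_inj] at he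
      subst he
      exact Sym2.mem_mk_right _ _
    | cons h' q =>
      rw [Walk.edges_cons, Walk.edges_cons, List.getLast?_cons_cons] at he
      rw [← Walk.edges_cons h'] at he
      exact ih e he

private lemma last_mem_last_edge {V : Type*} {G : SimpleGraph V} {a b : V} (w : G.Walk a b)
    (hw : w.edges ≠ []) : b ∈ w.edges.getLast hw :=
  last_mem_last_edge' w _ (List.getLast?_eq_getLast hw)

/-- Every vertex of a cycle lies in two distinct edges of the cycle. -/
private lemma cycle_two_edges {V : Type*} [DecidableEq V] {G : SimpleGraph V} {v : V}
    {p : G.Walk v v} (hp : p.IsCycle) {a : V} (ha : a ∈ p.support) :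
    ∃ e₁ ∈ p.edges, ∃ e₂ ∈ p.edges, e₁ ≠ e₂ ∧ a ∈ e₁ ∧ a ∈ e₂ := by
  set q := p.rotate a ha with hqdef
  have hq : q.IsCycle := hp.rotate ha
  have hmem : ∀ e, e ∈ q.edges ↔ e ∈ p.edges := fun e => (p.rotate_edges a ha).mem_iff
  have h3 : 3 ≤ q.edges.length := by
    rw [Walk.length_edges]; exact hq.three_le_length
  have hne : q.edges ≠ [] := by
    intro h; rw [h] at h3; simp at h3
  refine ⟨q.edges.head hne, (hmem _).1 (List.head_mem hne),
    q.edges.getLast hne, (hmem _).1 (List.getLast_mem hne), ?_,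
    head_mem_first_edge q hne, last_mem_last_edge q hne⟩
  have hnd : q.edges.Nodup := hq.isCircuit.isTrail.edges_nodup
  rw [List.head_eq_getElem_zero hne, List.getLast_eq_getElem]
  intro hcontra
  rw [hnd.getElem_inj_iff] at hcontra
  omega

private lemma closed_univ {n : ℕ} [NeZero n] (T : Finset (ZMod n)) (hne : T.Nonempty)
    (hcl : ∀ t ∈ T, t + 1 ∈ T) : ∀ x : ZMod n, x ∈ T := by
  obtain ⟨t₀, ht₀⟩ := hne
  have key : ∀ m : ℕ, t₀ + (m : ZMod n) ∈ T := by
    intro m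
    induction m with
    | zero => simpa using ht₀
    | succ k ih =>
        have : t₀ + ((k + 1 : ℕ) : ZMod n) = (t₀ + (k : ZMod n)) + 1 := by
          push_cast; ring
        rw [this]
        exact hcl _ ih
  intro x
  obtain ⟨m, hm⟩ := ZMod.natCast_zmod_surjective (x - t₀)
  have : x = t₀ + (m : ZMod n) := by rw [hm]; ring
  rw [this]; exact key m

/-- If `S` covers every vertex with `S`-degree exactly 2, `S` decomposes into
vertex-disjoint cycles, and there is an injective labeling `f : S → ℤ/nℤ` with edges of `S`
sharing a vertex receiving labels differing by ±1, then the decomposition consists of a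
single cycle. -/
theorem stmt13 {V : Type*} [Fintype V] [DecidableEq V] (G : SimpleGraph V)
    (n : ℕ) (hn : n = Fintype.card V) (h3 : 3 ≤ n)
    (S : Finset (Sym2 V)) (hSE : ∀ e ∈ S, e ∈ G.edgeSet)
    (hdeg : ∀ v : V, (S.filter (fun e => v ∈ e)).card = 2)
    (L : List (Σ v : V, G.Walk v v))
    (hcyc : ∀ p ∈ L, p.2.IsCycle)
    (hunion : (↑S : Set (Sym2 V)) = ⋃ p ∈ L, {e | e ∈ p.2.edges})
    (hdisj : L.Pairwise (fun p q =>
      Disjoint {v : V | v ∈ p.2.support} {v : V | v ∈ q.2.support}))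
    (f : Sym2 V → ZMod n)
    (hinj : Set.InjOn f ↑S)
    (hadj : ∀ e ∈ S, ∀ e' ∈ S, e ≠ e' → (∃ v : V, v ∈ e ∧ v ∈ e') →
      (f e - f e' = 1 ∨ f e - f e' = -1)) :
    L.length = 1 := by
  haveI : NeZero n := ⟨by omega⟩
  -- every edge of any cycle in L is in S
  have hedS : ∀ p ∈ L, ∀ e ∈ p.2.edges, e ∈ S := by
    intro p hp e he
    have : e ∈ (↑S : Set (Sym2 V)) := by
      rw [hunion]
      exact Set.mem_biUnion hp he
    exact this
  -- every vertex lies in the support of every cycle in L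
  have hcover : ∀ p ∈ L, ∀ x : V, x ∈ p.2.support := by
    intro p hp
    have hpc := hcyc p hp
    set T : Finset (ZMod n) := p.2.edges.toFinset.image f with hT
    have hclosed : ∀ t ∈ T, t + 1 ∈ T := by
      intro t ht
      simp only [hT, Finset.mem_image, List.mem_toFinset] at ht
      obtain ⟨e, he, hfe⟩ := ht
      obtain ⟨a, b, hab⟩ : ∃ a b, e = s(a, b) := by
        induction e using Sym2.ind with | _ a b => exact ⟨a, b, rfl⟩
      subst hab
      have heS : s(a, b) ∈ S := hedS p hp _ he
      have hGab : G.Adj a b := (G.mem_edgeSet).1 (hSE _ heS)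
      have hne_ab : a ≠ b := hGab.ne
      have ha : a ∈ p.2.support := p.2.fst_mem_support_of_mem_edges he
      have hb : b ∈ p.2.support := p.2.snd_mem_support_of_mem_edges he
      -- an edge of p at a different from s(a,b)
      have hA : ∃ ea ∈ p.2.edges, ea ≠ s(a, b) ∧ a ∈ ea := by
        obtain ⟨e₁, h1, e₂, h2, hne, ha1, ha2⟩ := cycle_two_edges hpc ha
        by_cases h : e₁ = s(a, b)
        · exact ⟨e₂, h2, by rw [← h]; exact hne.symm, ha2⟩
        · exact ⟨e₁, h1, h, ha1⟩
      have hB : ∃ eb ∈ p.2.edges, eb ≠ s(a, b) ∧ b ∈ eb := by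
        obtain ⟨e₁, h1, e₂, h2, hne, hb1, hb2⟩ := cycle_two_edges hpc hb
        by_cases h : e₁ = s(a, b)
        · exact ⟨e₂, h2, by rw [← h]; exact hne.symm, hb2⟩
        · exact ⟨e₁, h1, h, hb1⟩
      obtain ⟨ea, hea, hea_ne, ha_ea⟩ := hA
      obtain ⟨eb, heb, heb_ne, hb_eb⟩ := hB
      have heaS : ea ∈ S := hedS p hp _ hea
      have hebS : eb ∈ S := hedS p hp _ heb
      have hab_edges : ea ≠ eb := by
        intro h
        apply hea_ne
        exact (Sym2.mem_and_mem_iff hne_ab).1 ⟨ha_ea, h ▸ hb_eb⟩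
      have hfab : f ea ≠ f eb := fun h => hab_edges (hinj heaS hebS h)
      have h1 : f ea - f s(a, b) = 1 ∨ f ea - f s(a, b) = -1 :=
        hadj ea heaS _ heS hea_ne ⟨a, ha_ea, Sym2.mem_mk_left a b⟩
      have h2 : f eb - f s(a, b) = 1 ∨ f eb - f s(a, b) = -1 :=
        hadj eb hebS _ heS heb_ne ⟨b, hb_eb, Sym2.mem_mk_right a b⟩
      rw [← hfe]
      rcases h1 with h1 | h1
      · have : f ea = f s(a, b) + 1 := by linear_combination h1
        exact Finset.mem_image.2 ⟨ea, List.mem_toFinset.2 hea, by rw [this]⟩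
      · rcases h2 with h2 | h2
        · have : f eb = f s(a, b) + 1 := by linear_combination h2
          exact Finset.mem_image.2 ⟨eb, List.mem_toFinset.2 heb, by rw [this]⟩
        · exact absurd (by linear_combination h1 - h2 : f ea = f eb) hfab
    have hTne : T.Nonempty := by
      have h3' : 3 ≤ p.2.length := hpc.three_le_length
      have : p.2.edges ≠ [] := by
        intro h
        have := p.2.length_edges
        rw [h] at this
        simp at this
        omega
      obtain ⟨e, he⟩ := List.exists_mem_of_ne_nil _ this
      exact ⟨f e, Finset.mem_image.2 ⟨e, List.mem_toFinset.2 he, rfl⟩⟩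
    have hTuniv : T = Finset.univ := Finset.eq_univ_iff_forall.2 (closed_univ T hTne hclosed)
    have hTcard : T.card = n := by
      rw [hTuniv, Finset.card_univ, ZMod.card]
    have hlen : n ≤ p.2.length := by
      calc n = T.card := hTcard.symm
        _ ≤ p.2.edges.toFinset.card := Finset.card_image_le
        _ ≤ p.2.edges.length := p.2.edges.toFinset_card_le
        _ = p.2.length := p.2.length_edges
    -- the tail of the support is nodup of length p.2.length ≥ n = card V
    have hnd : p.2.support.tail.Nodup := hpc.support_nodup
    have htc : p.2.support.tail.toFinset.card = p.2.length := by
      rw [List.toFinset_card_of_nodup hnd, List.length_tail, p.2.length_support]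
      omega
    have huniv : p.2.support.tail.toFinset = Finset.univ := by
      apply Finset.eq_univ_of_card
      have hle : p.2.support.tail.toFinset.card ≤ Fintype.card V := Finset.card_le_univ _
      omega
    intro x
    have : x ∈ p.2.support.tail.toFinset := by rw [huniv]; exact Finset.mem_univ x
    exact List.mem_of_mem_tail (List.mem_toFinset.1 this)
  -- now conclude
  cases L with
  | nil =>
    exfalso
    have hV : Nonempty V := by
      rw [← Fintype.card_pos_iff]
      omega
    obtain ⟨v₀⟩ := hV
    have h2 := hdeg v₀
    have hSne : ∃ e, e ∈ S := by
      have : (S.filter (fun e => v₀ ∈ e)).Nonempty := Finset.card_pos.mp (by rw [h2]; norm_num)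
      obtain ⟨e, he⟩ := this
      exact ⟨e, (Finset.mem_filter.mp he).1⟩
    obtain ⟨e, he⟩ := hSne
    have : e ∈ (↑S : Set (Sym2 V)) := he
    rw [hunion] at this
    simp at this
  | cons p L' =>
    cases L' with
    | nil => rfl
    | cons q rest =>
      exfalso
      have hd := (List.pairwise_cons.mp hdisj).1 q (by simp)
      have hq1 : q.1 ∈ q.2.support := Walk.start_mem_support _
      have hp1 : q.1 ∈ p.2.support := hcover p (by simp) q.1
      exact (Set.disjoint_left.mp hd hp1) hq1
end
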